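/- Let (D1, M) be a periodic first-derivative SBP operator with diagonal mass matrix (M symmetric positive definite and diagonal, M·D1 + D1ᵀ·M = 0) and D2 a periodic second-derivative SBP operator with the same mass matrix M (M·D2 = −A2, A2 symmetric positive semidefinite). Let u : ℝ → ℝ^m be differentiable and satisfy the split-form Camassa-Holm semidiscretization ∂ₜu = −(I − D2)⁻¹·(D1·(u∘u) + u∘(D1·u) − (1/2)·D1·(u∘(D2·u)) − (1/2)·D2·(u∘(D1·u))) for all t. Then the discrete invariant (1/2)·u(t)ᵀ·M·(I − D2)·u(t) is constant in t. -/

import Mathlib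

/-!
Write `⟨x, y⟩ = xᵀ M y`. The SBP properties say that `D1` is skew-adjoint and `D2` self-adjoint
for this inner product, and since `M` is diagonal, `⟨x, y ∘ z⟩` is symmetric in `x, y, z`.
Together these make the split-form flux `r(u)` orthogonal to `u`: the terms of each pair
`D1 (u∘u), u∘(D1 u)` and `D1 (u∘(D2 u)), D2 (u∘(D1 u))` cancel against each other.
Since `M (I - D2)` is symmetric, the derivative of the invariant is
`uᵀ M (I - D2) ∂ₜu = -⟨u, r(u)⟩ = 0`.
-/

open Matrix

variable {n 𝕜 R : Type*} [Fintype n]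

section Deriv

variable [NontriviallyNormedField 𝕜]

theorem HasDerivAt.dotProduct {f g : 𝕜 → n → 𝕜} {f' g' : n → 𝕜} {t : 𝕜}
    (hf : HasDerivAt f f' t) (hg : HasDerivAt g g' t) :
    HasDerivAt (fun s => f s ⬝ᵥ g s) (f' ⬝ᵥ g t + f t ⬝ᵥ g') t :=
  (HasDerivAt.fun_sum fun i _ =>
    (hasDerivAt_pi.mp hf i).fun_mul (hasDerivAt_pi.mp hg i)).congr_deriv Finset.sum_add_distrib

theorem HasDerivAt.mulVec {m : Type*} {f : 𝕜 → n → 𝕜} {f' : n → 𝕜} {t : 𝕜}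
    (B : Matrix m n 𝕜) (hf : HasDerivAt f f' t) :
    HasDerivAt (fun s => B *ᵥ f s) (B *ᵥ f') t :=
  hasDerivAt_pi.mpr fun i =>
    HasDerivAt.fun_sum fun j _ => (hasDerivAt_pi.mp hf j).const_mul (B i j)

theorem HasDerivAt.dotProduct_mulVec_self {B : Matrix n n 𝕜} (hB : Bᵀ = B)
    {f : 𝕜 → n → 𝕜} {f' : n → 𝕜} {t : 𝕜} (hf : HasDerivAt f f' t) :
    HasDerivAt (fun s => f s ⬝ᵥ B *ᵥ f s) (2 * (f t ⬝ᵥ B *ᵥ f')) t := by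
  convert hf.dotProduct (hf.mulVec B) using 1
  rw [dotProduct_mulVec f', ← mulVec_transpose, hB, dotProduct_comm (B *ᵥ f')]
  ring

end Deriv

theorem dotProduct_mulVec_mulVec_of_mul_eq [CommSemiring R] {M D E : Matrix n n R}
    (h : M * D = Eᵀ * M) (x y : n → R) :
    x ⬝ᵥ M *ᵥ (D *ᵥ y) = (E *ᵥ x) ⬝ᵥ M *ᵥ y := by
  rw [mulVec_mulVec, h, ← mulVec_mulVec, dotProduct_mulVec, vecMul_transpose]

theorem Matrix.IsDiag.dotProduct_mulVec_mul_comm [CommSemiring R] [DecidableEq n]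
    {M : Matrix n n R} (hM : M.IsDiag) (x y z : n → R) :
    x ⬝ᵥ M *ᵥ (y * z) = y ⬝ᵥ M *ᵥ (x * z) := by
  rw [← hM.diagonal_diag]
  simp only [dotProduct, mulVec_diagonal, Pi.mul_apply]
  exact Finset.sum_congr rfl fun i _ => by ring

/-- The flux `r(u)` of the split-form semidiscretization `∂ₜu = -(I - D2)⁻¹ r(u)`. -/
def camassaHolmSplitFlux [Field R] (D1 D2 : Matrix n n R) (u : n → R) : n → R :=
  D1 *ᵥ (u * u) + u * (D1 *ᵥ u) - (1 / 2 : R) • (D1 *ᵥ (u * (D2 *ᵥ u)))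
    - (1 / 2 : R) • (D2 *ᵥ (u * (D1 *ᵥ u)))

theorem dotProduct_mulVec_camassaHolmSplitFlux [Field R] [DecidableEq n]
    {M D1 D2 : Matrix n n R} (hM : M.IsDiag) (hD1 : M * D1 + D1ᵀ * M = 0)
    (hD2 : M * D2 = D2ᵀ * M) (u : n → R) :
    u ⬝ᵥ M *ᵥ camassaHolmSplitFlux D1 D2 u = 0 := by
  have hD1adj : M * D1 = (-D1)ᵀ * M := by
    rw [transpose_neg, Matrix.neg_mul]
    exact eq_neg_of_add_eq_zero_left hD1
  have skew (x y : n → R) : x ⬝ᵥ M *ᵥ (D1 *ᵥ y) = -((D1 *ᵥ x) ⬝ᵥ M *ᵥ y) := by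
    rw [dotProduct_mulVec_mulVec_of_mul_eq hD1adj, neg_mulVec, neg_dotProduct]
  have h₁ : u ⬝ᵥ M *ᵥ (D1 *ᵥ (u * u)) = -(u ⬝ᵥ M *ᵥ (u * (D1 *ᵥ u))) := by
    rw [skew, hM.dotProduct_mulVec_mul_comm, mul_comm u]
  have h₂ : u ⬝ᵥ M *ᵥ (D1 *ᵥ (u * (D2 *ᵥ u)))
      = -(u ⬝ᵥ M *ᵥ (D2 *ᵥ (u * (D1 *ᵥ u)))) := by
    rw [skew, dotProduct_mulVec_mulVec_of_mul_eq hD2, hM.dotProduct_mulVec_mul_comm,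
      hM.dotProduct_mulVec_mul_comm (D2 *ᵥ u), mul_comm (D1 *ᵥ u)]
  simp only [camassaHolmSplitFlux, mulVec_add, mulVec_sub, mulVec_smul, dotProduct_add,
    dotProduct_sub, dotProduct_smul, smul_eq_mul, h₁, h₂]
  ring

theorem isUnit_det_one_sub_of_mul_eq_neg [Field R] [PartialOrder R] [StarRing R]
    [AddLeftMono R] [DecidableEq n] {M A D : Matrix n n R} (hM : M.PosDef) (hA : A.PosSemidef)
    (hD : M * D = -A) : IsUnit (1 - D).det := by
  have hpos : (M * (1 - D)).PosDef := by
    rw [Matrix.mul_sub, Matrix.mul_one, hD, sub_neg_eq_add]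
    exact hM.add_posSemidef hA
  have hdet := (isUnit_iff_isUnit_det _).mp hpos.isUnit
  rw [det_mul] at hdet
  exact isUnit_of_mul_isUnit_right hdet

/-- The split-form Camassa-Holm semidiscretization
`∂ₜu = −(I − D2)⁻¹ (D1 (u∘u) + u∘(D1 u) − (1/2) D1 (u∘(D2 u)) − (1/2) D2 (u∘(D1 u)))`
with periodic SBP operators `D1`, `D2` sharing a diagonal symmetric positive
definite mass matrix `M` conserves the discrete invariant
`(1/2) uᵀ·M·(I − D2)·u`. -/
theorem camassa_holm_conserves_invariant
    (m : ℕ) (D1 D2 M A2 : Matrix (Fin m) (Fin m) ℝ)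
    (hM : M.PosDef) (hMdiag : M.IsDiag)
    (hD1 : M * D1 + D1ᵀ * M = 0)
    (hA2 : A2.PosSemidef)
    (hD2 : M * D2 = -A2)
    (u : ℝ → Fin m → ℝ)
    (hu : ∀ t, HasDerivAt u
      (-((1 - D2)⁻¹ *ᵥ (D1 *ᵥ (u t * u t) + u t * (D1 *ᵥ u t)
        - (1 / 2 : ℝ) • (D1 *ᵥ (u t * (D2 *ᵥ u t)))
        - (1 / 2 : ℝ) • (D2 *ᵥ (u t * (D1 *ᵥ u t)))))) t) :
    ∀ t₁ t₂ : ℝ,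
      (1 / 2 : ℝ) * (u t₁ ⬝ᵥ ((M * (1 - D2)) *ᵥ u t₁))
        = (1 / 2 : ℝ) * (u t₂ ⬝ᵥ ((M * (1 - D2)) *ᵥ u t₂)) := by
  have hMsymm : Mᵀ = M := hM.isHermitian
  have hA2symm : A2ᵀ = A2 := hA2.isHermitian
  have hD2adj : M * D2 = D2ᵀ * M := by
    calc M * D2 = (M * D2)ᵀ := by rw [hD2, transpose_neg, hA2symm]
      _ = D2ᵀ * M := by rw [transpose_mul, hMsymm]
  have hBsymm : (M * (1 - D2))ᵀ = M * (1 - D2) := by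
    rw [Matrix.mul_sub, Matrix.mul_one, transpose_sub, transpose_mul, hMsymm, ← hD2adj]
  have hinv : (1 - D2) * (1 - D2)⁻¹ = 1 :=
    mul_nonsing_inv _ (isUnit_det_one_sub_of_mul_eq_neg hM hA2 hD2)
  have hderiv (t : ℝ) :
      HasDerivAt (fun s => (1 / 2 : ℝ) * (u s ⬝ᵥ (M * (1 - D2)) *ᵥ u s)) 0 t := by
    have hut : HasDerivAt u (-((1 - D2)⁻¹ *ᵥ camassaHolmSplitFlux D1 D2 (u t))) t := hu t
    refine ((hut.dotProduct_mulVec_self hBsymm).const_mul (1 / 2 : ℝ)).congr_deriv ?_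
    rw [mulVec_neg, mulVec_mulVec, Matrix.mul_assoc, hinv, Matrix.mul_one, dotProduct_neg,
      dotProduct_mulVec_camassaHolmSplitFlux hMdiag hD1 hD2adj]
    ring
  exact fun t₁ t₂ => is_const_of_deriv_eq_zero (fun t => (hderiv t).differentiableAt)
    (fun t => (hderiv t).deriv) t₁ t₂
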